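/- arXiv:1410.2305 — 2 statements merged into one kernel-verified Lean document; each statement's English description precedes it below -/
import Mathlib

section
/- Let S be a closed operator on X with 0 ∈ ρ(S), and let A₁, A₂ be bounded linear operators on X satisfying A₁ + A₂ = S⁻², A₁A₂ = A₂A₁ = 0, and AⱼS⁻¹ = S⁻¹Aⱼ for j = 1, 2, and let Pⱼ be the closed projections defined by D(Pⱼ) = {x ∈ X : Aⱼx ∈ D(S²)} and Pⱼx = S²Aⱼx. Then the subspaces X₁ = range(P₁) and X₂ = range(P₂) satisfy X₁ = ker(A₂) and X₂ = ker(A₁); they are closed, S-invariant, and (S − λ)⁻¹-invariant for every λ ∈ ρ(S); and σ(S) = σ(S|X₁) ∪ σ(S|X₂). -/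
open Complex MeasureTheory Set Filter

noncomputable section

variable {E : Type*} [NormedAddCommGroup E] [NormedSpace ℂ E]

/-- `R : E →L[ℂ] E` is the (everywhere defined, bounded) inverse of `S - lam`. -/
def IsResolventAt (S : E →ₗ.[ℂ] E) (lam : ℂ) (R : E →L[ℂ] E) : Prop :=
  (∀ x, R x ∈ S.domain) ∧
  (∀ x : S.domain, R (S x - lam • (x : E)) = (x : E)) ∧
  (∀ (x : E) (hx : R x ∈ S.domain), S ⟨R x, hx⟩ - lam • R x = x)

/-- The resolvent set of the (possibly unbounded, not densely defined) operator `S`. -/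
def resolvSet (S : E →ₗ.[ℂ] E) : Set ℂ := {lam | ∃ R, IsResolventAt S lam R}

/-- The spectrum of `S`. -/
def pSpectrum (S : E →ₗ.[ℂ] E) : Set ℂ := (resolvSet S)ᶜ

-- The resolvent `(S - lam)⁻¹` of `S` at `lam` (junk value `0` if `lam ∉ ρ(S)`).
open Classical in
def res (S : E →ₗ.[ℂ] E) (lam : ℂ) : E →L[ℂ] E :=
  if h : ∃ R, IsResolventAt S lam R then h.choose else 0

/-- Condition (H): the strip `|Re lam| ≤ h` consists of resolvent points
and the resolvent is bounded by `M` there. -/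
def CondH (S : E →ₗ.[ℂ] E) (h M : ℝ) : Prop :=
  0 < h ∧ ∀ lam : ℂ, |lam.re| ≤ h → lam ∈ resolvSet S ∧ ‖res S lam‖ ≤ M

/-- The set of `x` such that the local resolvent `lam ↦ (S - lam)⁻¹ x` has a bounded analytic
extension to (a neighbourhood of) `H`; it is a linear subspace of `E`. -/
def Gsub (S : E →ₗ.[ℂ] E) (H : Set ℂ) : Submodule ℂ E where
  carrier := {x | ∃ φ : ℂ → E,
    (∃ U, IsOpen U ∧ H ⊆ U ∧ DifferentiableOn ℂ φ U) ∧
    (∃ C : ℝ, ∀ z ∈ H, ‖φ z‖ ≤ C) ∧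
    (∀ t : ℝ, φ ((t : ℂ) * Complex.I) = res S ((t : ℂ) * Complex.I) x)}
  zero_mem' := ⟨0, ⟨univ, isOpen_univ, subset_univ _, differentiableOn_const 0⟩,
    ⟨0, fun z _ => by simp⟩, fun t => by simp⟩
  add_mem' := by
    rintro a b ⟨φ, ⟨U, hU, hHU, hdU⟩, ⟨C, hC⟩, hφ⟩ ⟨ψ, ⟨V, hV, hHV, hdV⟩, ⟨D, hD⟩, hψ⟩
    refine ⟨φ + ψ, ⟨U ∩ V, hU.inter hV, subset_inter hHU hHV,
      ((hdU.mono inter_subset_left).add (hdV.mono inter_subset_right))⟩,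
      ⟨C + D, fun z hz => (norm_add_le _ _).trans (add_le_add (hC z hz) (hD z hz))⟩,
      fun t => by simp [hφ t, hψ t]⟩
  smul_mem' := by
    rintro c a ⟨φ, ⟨U, hU, hHU, hdU⟩, ⟨C, hC⟩, hφ⟩
    refine ⟨c • φ, ⟨U, hU, hHU, hdU.const_smul c⟩,
      ⟨‖c‖ * C, fun z hz => by
        rw [Pi.smul_apply, norm_smul]
        exact mul_le_mul_of_nonneg_left (hC z hz) (norm_nonneg c)⟩,
      fun t => by simp [hφ t]⟩

/-- The subspace `G₊` of `x` whose local resolvent extends boundedly and analytically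
to the closed left half plane. -/
def Gp (S : E →ₗ.[ℂ] E) : Submodule ℂ E := Gsub S {z : ℂ | z.re ≤ 0}

/-- The subspace `G₋` of `x` whose local resolvent extends boundedly and analytically
to the closed right half plane. -/
def Gm (S : E →ₗ.[ℂ] E) : Submodule ℂ E := Gsub S {z : ℂ | 0 ≤ z.re}

/-- The part of the operator `S` in the subspace `Y`: the restriction of `S` to
`{x ∈ D(S) ∩ Y : S x ∈ Y}`, regarded as an operator in `Y`. If `Y` is `S`-invariant
this is the restriction `S|Y`. -/
def partIn (S : E →ₗ.[ℂ] E) (Y : Submodule ℂ E) : ↥Y →ₗ.[ℂ] ↥Y :=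
  Submodule.toLinearPMap (S.graph.comap (Y.subtype.prodMap Y.subtype))

/-- `x ∈ D(S²)`. -/
def memD2 (S : E →ₗ.[ℂ] E) (x : E) : Prop :=
  ∃ h : x ∈ S.domain, S ⟨x, h⟩ ∈ S.domain

-- `S² x` (junk value `0` if `x ∉ D(S²)`).
open Classical in
def sqApply (S : E →ₗ.[ℂ] E) (x : E) : E :=
  if h : memD2 S x then S ⟨S ⟨x, h.choose⟩, h.choose_spec⟩ else 0

/-- `S` is dichotomous with respect to the decomposition `E = Xp ⊕ Xm`. -/
structure IsDichotomousWrt (S : E →ₗ.[ℂ] E) (Xp Xm : Submodule ℂ E) : Prop where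
  closed_p : IsClosed (Xp : Set E)
  closed_m : IsClosed (Xm : Set E)
  compl : IsCompl Xp Xm
  imag : ∀ t : ℝ, (t : ℂ) * Complex.I ∈ resolvSet S
  inv_p : ∀ x : S.domain, (x : E) ∈ Xp → S x ∈ Xp
  inv_m : ∀ x : S.domain, (x : E) ∈ Xm → S x ∈ Xm
  spec_p : pSpectrum (partIn S Xp) ⊆ {lam : ℂ | 0 < lam.re}
  spec_m : pSpectrum (partIn S Xm) ⊆ {lam : ℂ | lam.re < 0}

/-- `S` is strictly dichotomous with respect to the decomposition `E = Xp ⊕ Xm`. -/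
structure IsStrictlyDichotomousWrt (S : E →ₗ.[ℂ] E) (Xp Xm : Submodule ℂ E)
    extends IsDichotomousWrt S Xp Xm : Prop where
  bnd_p : ∃ M : ℝ, ∀ lam : ℂ, lam.re ≤ 0 →
    lam ∈ resolvSet (partIn S Xp) ∧ ‖res (partIn S Xp) lam‖ ≤ M
  bnd_m : ∃ M : ℝ, ∀ lam : ℂ, 0 ≤ lam.re →
    lam ∈ resolvSet (partIn S Xm) ∧ ‖res (partIn S Xm) lam‖ ≤ M

/-- `S` is strictly dichotomous (w.r.t. some decomposition). -/
def IsStrictlyDichotomous (S : E →ₗ.[ℂ] E) : Prop :=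
  ∃ Xp Xm : Submodule ℂ E, IsStrictlyDichotomousWrt S Xp Xm

/-- `S` is bisectorial with constant `M`. -/
def Bisectorial (S : E →ₗ.[ℂ] E) (M : ℝ) : Prop :=
  0 < M ∧ ∀ lam : ℂ, lam.re = 0 → lam ≠ 0 →
    lam ∈ resolvSet S ∧ ‖res S lam‖ ≤ M / ‖lam‖

/-- `S` is almost bisectorial with constants `M` and exponent `β`. -/
def AlmostBisectorial (S : E →ₗ.[ℂ] E) (M β : ℝ) : Prop :=
  0 < M ∧ 0 < β ∧ β < 1 ∧ ∀ lam : ℂ, lam.re = 0 → lam ≠ 0 →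
    lam ∈ resolvSet S ∧ ‖res S lam‖ ≤ M / ‖lam‖ ^ β

/-- The operator `A₊ = (2πi)⁻¹ ∫_{Re lam = h} lam⁻² (S-lam)⁻¹ dlam`. -/
def Aplus (S : E →ₗ.[ℂ] E) (h : ℝ) : E →L[ℂ] E :=
  (2 * (Real.pi : ℂ))⁻¹ •
    ∫ t : ℝ, (((h : ℂ) + (t : ℂ) * Complex.I) ^ 2)⁻¹ • res S ((h : ℂ) + (t : ℂ) * Complex.I)

/-- The operator `A₋ = -(2πi)⁻¹ ∫_{Re lam = -h} lam⁻² (S-lam)⁻¹ dlam`. -/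
def Aminus (S : E →ₗ.[ℂ] E) (h : ℝ) : E →L[ℂ] E :=
  -(2 * (Real.pi : ℂ))⁻¹ •
    ∫ t : ℝ, ((-(h : ℂ) + (t : ℂ) * Complex.I) ^ 2)⁻¹ • res S (-(h : ℂ) + (t : ℂ) * Complex.I)

/-- The operator `B₊ = (2πi)⁻¹ ∫_{Re lam = h} lam⁻¹ (S-lam)⁻¹ dlam`. -/
def Bplus (S : E →ₗ.[ℂ] E) (h : ℝ) : E →L[ℂ] E :=
  (2 * (Real.pi : ℂ))⁻¹ •
    ∫ t : ℝ, ((h : ℂ) + (t : ℂ) * Complex.I)⁻¹ • res S ((h : ℂ) + (t : ℂ) * Complex.I)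

/-- The operator `B₋ = -(2πi)⁻¹ ∫_{Re lam = -h} lam⁻¹ (S-lam)⁻¹ dlam`. -/
def Bminus (S : E →ₗ.[ℂ] E) (h : ℝ) : E →L[ℂ] E :=
  -(2 * (Real.pi : ℂ))⁻¹ •
    ∫ t : ℝ, (-(h : ℂ) + (t : ℂ) * Complex.I)⁻¹ • res S (-(h : ℂ) + (t : ℂ) * Complex.I)

/-- `M₊`, the closure of the range of `A₊`. -/
def Msubp (S : E →ₗ.[ℂ] E) (h : ℝ) : Submodule ℂ E :=
  (LinearMap.range ((Aplus S h) : E →ₗ[ℂ] E)).topologicalClosure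

/-- `M₋`, the closure of the range of `A₋`. -/
def Msubm (S : E →ₗ.[ℂ] E) (h : ℝ) : Submodule ℂ E :=
  (LinearMap.range ((Aminus S h) : E →ₗ[ℂ] E)).topologicalClosure


variable {X : Type*} [NormedAddCommGroup X] [NormedSpace ℂ X] [CompleteSpace X]

/-! Everything is read off the graph of `S`: `(S - μ)⁻¹ y = a` iff `(a, y + μ a) ∈ graph S`, so
resolvent identities become linear algebra in the graph. Since `A₁`, `A₂` commute with `S⁻¹`,
they leave the graph invariant, hence commute with every resolvent, and their kernels are closed
and invariant. From `S⁻² = A₁ + A₂` and `A₂ A₁ = 0`, `y ∈ ker A₂` iff `S⁻² y = A₁ y`, i.e.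
`y = S² A₁ y`, and `S⁻² y ∈ range A₁` forces `A₂ y = 0`. For the spectrum, the resolvent of `S`
restricts to the parts, and conversely the resolvents of the parts glue to one of `S`. -/

/-- `A S ⊆ S A`, phrased as invariance of the graph of `S` under `A × A`. -/
def CommutesWith (A : E →L[ℂ] E) (S : E →ₗ.[ℂ] E) : Prop :=
  ∀ p ∈ S.graph, (A p.1, A p.2) ∈ S.graph

section Resolvent

variable {S : E →ₗ.[ℂ] E} {μ : ℂ}

theorem isResolventAt_iff {R : E →L[ℂ] E} :
    IsResolventAt S μ R ↔
      (∀ y, (R y, y + μ • R y) ∈ S.graph) ∧ ∀ a y, (a, y + μ • a) ∈ S.graph → R y = a := by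
  constructor
  · rintro ⟨hdom, hleft, hright⟩
    refine ⟨fun y => ?_, fun a y hay => ?_⟩
    · rw [← LinearPMap.image_iff (hdom y)]
      exact (eq_add_of_sub_eq (hright y (hdom y))).symm
    · have ha := LinearPMap.mem_domain_of_mem_graph hay
      have hSa := (LinearPMap.image_iff ha).2 hay
      have hRa := hleft ⟨a, ha⟩
      rwa [← hSa, add_sub_cancel_right] at hRa
  · rintro ⟨hgraph, huniq⟩
    refine ⟨fun y => LinearPMap.mem_domain_of_mem_graph (hgraph y), fun x => ?_, fun y hy => ?_⟩
    · exact huniq x _ (by rw [sub_add_cancel]; exact S.mem_graph x)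
    · rw [← (LinearPMap.image_iff hy).2 (hgraph y), add_sub_cancel_right]

theorem isResolventAt_res (h : μ ∈ resolvSet S) : IsResolventAt S μ (res S μ) := by
  have h' : ∃ R, IsResolventAt S μ R := h
  rw [res, dif_pos h']
  exact h'.choose_spec

theorem res_eq_iff (h : μ ∈ resolvSet S) {y a : E} :
    res S μ y = a ↔ (a, y + μ • a) ∈ S.graph := by
  obtain ⟨hgraph, huniq⟩ := isResolventAt_iff.1 (isResolventAt_res h)
  exact ⟨fun hya => hya ▸ hgraph y, huniq a y⟩

theorem res_zero_eq_iff (h0 : (0 : ℂ) ∈ resolvSet S) {y a : E} :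
    res S 0 y = a ↔ (a, y) ∈ S.graph := by
  simpa using res_eq_iff h0

theorem res_zero_injective (h0 : (0 : ℂ) ∈ resolvSet S) {y : E} (hy : res S 0 y = 0) : y = 0 :=
  S.graph_fst_eq_zero_snd ((res_zero_eq_iff h0).1 hy) rfl

theorem memD2_and_sqApply_eq_iff (h0 : (0 : ℂ) ∈ resolvSet S) {a y : E} :
    (memD2 S a ∧ sqApply S a = y) ↔ res S 0 (res S 0 y) = a := by
  constructor
  · rintro ⟨hd, rfl⟩
    obtain ⟨ha, hSa⟩ := hd
    rw [sqApply, dif_pos ⟨ha, hSa⟩, (res_zero_eq_iff h0).2 (S.mem_graph ⟨_, hSa⟩),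
      (res_zero_eq_iff h0).2 (S.mem_graph ⟨a, ha⟩)]
  · intro hya
    have hb := (res_zero_eq_iff h0 (y := y)).1 rfl
    have hab := (res_zero_eq_iff h0).1 hya
    have ha := LinearPMap.mem_domain_of_mem_graph hab
    have hSa := (LinearPMap.image_iff ha).2 hab
    have hb_dom := LinearPMap.mem_domain_of_mem_graph hb
    have hd : memD2 S a := ⟨ha, hSa ▸ hb_dom⟩
    refine ⟨hd, ?_⟩
    rw [sqApply, dif_pos hd]
    exact ((LinearPMap.image_iff _).2 (hSa ▸ hb)).symm

end Resolvent

section Commuting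

variable {S : E →ₗ.[ℂ] E} {A : E →L[ℂ] E}

theorem commutesWith_of_res_zero (h0 : (0 : ℂ) ∈ resolvSet S)
    (hA : ∀ x, A (res S 0 x) = res S 0 (A x)) : CommutesWith A S := by
  intro p hp
  rw [← res_zero_eq_iff h0, ← hA, (res_zero_eq_iff h0).2 hp]

namespace CommutesWith

theorem res_apply (hA : CommutesWith A S) {μ : ℂ} (hμ : μ ∈ resolvSet S) (x : E) :
    A (res S μ x) = res S μ (A x) := by
  refine ((res_eq_iff hμ).2 ?_).symm
  simpa using hA _ ((res_eq_iff hμ).1 rfl)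

theorem apply_map_eq_zero (hA : CommutesWith A S) (x : S.domain) (hx : A x = 0) :
    A (S x) = 0 :=
  S.graph_fst_eq_zero_snd (hA _ (S.mem_graph x)) hx

theorem res_mem_ker (hA : CommutesWith A S) {μ : ℂ} (hμ : μ ∈ resolvSet S) {x : E}
    (hx : A x = 0) : A (res S μ x) = 0 := by
  rw [hA.res_apply hμ, hx, map_zero]

end CommutesWith

theorem range_sqApply_eq_ker (h0 : (0 : ℂ) ∈ resolvSet S) {B : E →L[ℂ] E}
    (hsum : ∀ x, A x + B x = res S 0 (res S 0 x)) (hBA : ∀ x, B (A x) = 0)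
    (hB : ∀ x, B (res S 0 x) = res S 0 (B x)) :
    {y : E | ∃ x : E, memD2 S (A x) ∧ y = sqApply S (A x)} = {y | B y = 0} := by
  ext y
  simp only [Set.mem_ofPred_eq, eq_comm (a := y), memD2_and_sqApply_eq_iff h0]
  constructor
  · rintro ⟨x, hx⟩
    apply res_zero_injective h0
    apply res_zero_injective h0
    rw [← hB, ← hB, hx, hBA]
  · intro hy
    exact ⟨y, by rw [← hsum, hy, add_zero]⟩

end Commuting

section Part

variable {S : E →ₗ.[ℂ] E} {Y : Submodule ℂ E}

theorem mem_graph_partIn_iff {a b : Y} :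
    (a, b) ∈ (partIn S Y).graph ↔ ((a : E), (b : E)) ∈ S.graph := by
  rw [partIn, Submodule.toLinearPMap_graph_eq]
  · rfl
  · rintro ⟨a, b⟩ hab (ha : a = 0)
    exact Subtype.ext (S.graph_fst_eq_zero_snd hab (by simp [ha]))

theorem coe_res_partIn_eq_iff {μ : ℂ} (hμ : μ ∈ resolvSet (partIn S Y)) {y a : Y} :
    (res (partIn S Y) μ y : E) = a ↔ ((a : E), (y : E) + μ • (a : E)) ∈ S.graph := by
  rw [Subtype.ext_iff.symm, res_eq_iff hμ, mem_graph_partIn_iff]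
  rfl

theorem mem_resolvSet_partIn {μ : ℂ} (hμ : μ ∈ resolvSet S) (hY : ∀ x ∈ Y, res S μ x ∈ Y) :
    μ ∈ resolvSet (partIn S Y) := by
  let R : Y →L[ℂ] Y := ((res S μ).comp Y.subtypeL).codRestrict Y fun x => hY _ x.2
  refine ⟨R, isResolventAt_iff.2 ⟨fun y => ?_, fun a y hay => ?_⟩⟩
  · rw [mem_graph_partIn_iff]
    exact (res_eq_iff hμ).1 rfl
  · rw [mem_graph_partIn_iff] at hay
    exact Subtype.ext ((res_eq_iff hμ).2 hay)

end Part

section Splitting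

variable {S : E →ₗ.[ℂ] E} {A₁ A₂ : E →L[ℂ] E} {Y₁ Y₂ : Submodule ℂ E}

/-- The candidate is `(S - μ)⁻¹ = S⁻¹ + μ S⁻² + μ² S⁻² (S - μ)⁻¹`, where
`S⁻² (S - μ)⁻¹ = (A₁ + A₂)(S - μ)⁻¹` is assembled from the resolvents of the parts. -/
theorem mem_resolvSet_of_mem_resolvSet_partIn (h0 : (0 : ℂ) ∈ resolvSet S)
    (hsum : ∀ x, A₁ x + A₂ x = res S 0 (res S 0 x))
    (hA₁ : CommutesWith A₁ S) (hA₂ : CommutesWith A₂ S)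
    (hY₁ : ∀ x, A₁ x ∈ Y₁) (hY₂ : ∀ x, A₂ x ∈ Y₂) {μ : ℂ}
    (hμ₁ : μ ∈ resolvSet (partIn S Y₁)) (hμ₂ : μ ∈ resolvSet (partIn S Y₂)) :
    μ ∈ resolvSet S := by
  set R := res S 0
  let C₁ : E →L[ℂ] E := Y₁.subtypeL.comp ((res (partIn S Y₁) μ).comp (A₁.codRestrict Y₁ hY₁))
  let C₂ : E →L[ℂ] E := Y₂.subtypeL.comp ((res (partIn S Y₂) μ).comp (A₂.codRestrict Y₂ hY₂))
  have hR : ∀ y, (R y, y) ∈ S.graph := fun y => (res_zero_eq_iff h0).1 rfl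
  have hC₁ : ∀ y, (C₁ y, A₁ y + μ • C₁ y) ∈ S.graph := fun y =>
    (coe_res_partIn_eq_iff hμ₁).1 rfl
  have hC₂ : ∀ y, (C₂ y, A₂ y + μ • C₂ y) ∈ S.graph := fun y =>
    (coe_res_partIn_eq_iff hμ₂).1 rfl
  refine ⟨R + μ • R.comp R + μ ^ 2 • (C₁ + C₂), isResolventAt_iff.2 ⟨fun y => ?_, fun a y hay => ?_⟩⟩
  · have h := S.graph.add_mem (S.graph.add_mem (hR y) (S.graph.smul_mem μ (hR (R y))))
      (S.graph.smul_mem (μ ^ 2) (S.graph.add_mem (hC₁ y) (hC₂ y)))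
    convert h using 1
    ext
    · simp
    · simp only [add_apply, smul_apply,
        ContinuousLinearMap.comp_apply, Prod.snd_add, Prod.smul_snd, ← hsum]
      module
  · have hRy : R y = a - μ • R a := by
      rw [eq_sub_iff_add_eq, ← map_smul, ← map_add]
      exact (res_zero_eq_iff h0).2 hay
    have hC₁a : C₁ y = A₁ a := (coe_res_partIn_eq_iff hμ₁ (a := ⟨A₁ a, hY₁ a⟩)).2 <| by
      simpa using hA₁ _ hay
    have hC₂a : C₂ y = A₂ a := (coe_res_partIn_eq_iff hμ₂ (a := ⟨A₂ a, hY₂ a⟩)).2 <| by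
      simpa using hA₂ _ hay
    simp only [add_apply, smul_apply,
      ContinuousLinearMap.comp_apply, hRy, hC₁a, hC₂a, hsum, map_sub, map_smul]
    module

theorem pSpectrum_eq_union_pSpectrum_partIn (h0 : (0 : ℂ) ∈ resolvSet S)
    (hsum : ∀ x, A₁ x + A₂ x = res S 0 (res S 0 x))
    (hA₁ : CommutesWith A₁ S) (hA₂ : CommutesWith A₂ S)
    (hY₁ : ∀ x, A₁ x ∈ Y₁) (hY₂ : ∀ x, A₂ x ∈ Y₂)
    (hres₁ : ∀ μ ∈ resolvSet S, ∀ x ∈ Y₁, res S μ x ∈ Y₁)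
    (hres₂ : ∀ μ ∈ resolvSet S, ∀ x ∈ Y₂, res S μ x ∈ Y₂) :
    pSpectrum S = pSpectrum (partIn S Y₁) ∪ pSpectrum (partIn S Y₂) := by
  ext μ
  simp only [pSpectrum, Set.mem_union, Set.mem_compl_iff, ← not_and_or, not_iff_not]
  exact ⟨fun hμ => ⟨mem_resolvSet_partIn hμ (hres₁ μ hμ), mem_resolvSet_partIn hμ (hres₂ μ hμ)⟩,
    fun ⟨hμ₁, hμ₂⟩ => mem_resolvSet_of_mem_resolvSet_partIn h0 hsum hA₁ hA₂ hY₁ hY₂ hμ₁ hμ₂⟩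

end Splitting

theorem statement1_general (S : X →ₗ.[ℂ] X)
    (h0 : (0 : ℂ) ∈ resolvSet S)
    (A₁ A₂ : X →L[ℂ] X)
    (hsum : ∀ x : X, A₁ x + A₂ x = res S 0 (res S 0 x))
    (h12 : ∀ x : X, A₁ (A₂ x) = 0) (h21 : ∀ x : X, A₂ (A₁ x) = 0)
    (hcomm1 : ∀ x : X, A₁ (res S 0 x) = res S 0 (A₁ x))
    (hcomm2 : ∀ x : X, A₂ (res S 0 x) = res S 0 (A₂ x)) :
    ∃ Y₁ Y₂ : Submodule ℂ X,
      -- Y₁ = range P₁, Y₂ = range P₂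
      ((Y₁ : Set X) = {y : X | ∃ x : X, memD2 S (A₁ x) ∧ y = sqApply S (A₁ x)}) ∧
      ((Y₂ : Set X) = {y : X | ∃ x : X, memD2 S (A₂ x) ∧ y = sqApply S (A₂ x)}) ∧
      -- X₁ = ker A₂, X₂ = ker A₁
      ((Y₁ : Set X) = {x : X | A₂ x = 0}) ∧
      ((Y₂ : Set X) = {x : X | A₁ x = 0}) ∧
      -- closedness
      IsClosed (Y₁ : Set X) ∧ IsClosed (Y₂ : Set X) ∧
      -- S-invariance
      (∀ x : S.domain, (x : X) ∈ Y₁ → S x ∈ Y₁) ∧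
      (∀ x : S.domain, (x : X) ∈ Y₂ → S x ∈ Y₂) ∧
      -- resolvent invariance
      (∀ lam ∈ resolvSet S, ∀ x ∈ Y₁, res S lam x ∈ Y₁) ∧
      (∀ lam ∈ resolvSet S, ∀ x ∈ Y₂, res S lam x ∈ Y₂) ∧
      -- spectral splitting
      pSpectrum S = pSpectrum (partIn S Y₁) ∪ pSpectrum (partIn S Y₂) := by
  have hA₁ := commutesWith_of_res_zero h0 hcomm1
  have hA₂ := commutesWith_of_res_zero h0 hcomm2
  have hres₁ : ∀ μ ∈ resolvSet S, ∀ x ∈ LinearMap.ker (A₂ : X →ₗ[ℂ] X),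
      res S μ x ∈ LinearMap.ker (A₂ : X →ₗ[ℂ] X) := fun μ hμ _ hx => hA₂.res_mem_ker hμ hx
  have hres₂ : ∀ μ ∈ resolvSet S, ∀ x ∈ LinearMap.ker (A₁ : X →ₗ[ℂ] X),
      res S μ x ∈ LinearMap.ker (A₁ : X →ₗ[ℂ] X) := fun μ hμ _ hx => hA₁.res_mem_ker hμ hx
  refine ⟨LinearMap.ker (A₂ : X →ₗ[ℂ] X), LinearMap.ker (A₁ : X →ₗ[ℂ] X),
    (range_sqApply_eq_ker h0 hsum h21 hcomm2).symm,
    (range_sqApply_eq_ker h0 (fun x => (add_comm _ _).trans (hsum x)) h12 hcomm1).symm,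
    rfl, rfl, A₂.isClosed_ker, A₁.isClosed_ker, hA₂.apply_map_eq_zero, hA₁.apply_map_eq_zero,
    hres₁, hres₂, pSpectrum_eq_union_pSpectrum_partIn h0 hsum hA₁ hA₂ h21 h12 hres₁ hres₂⟩

/-- the subspaces `X₁ = range P₁`, `X₂ = range P₂` satisfy `X₁ = ker A₂`,
`X₂ = ker A₁`, are closed, `S`- and `(S-lam)⁻¹`-invariant, and
`σ(S) = σ(S|X₁) ∪ σ(S|X₂)`. -/
theorem statement1 (S : X →ₗ.[ℂ] X)
    (hclosed : IsClosed (S.graph : Set (X × X)))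
    (h0 : (0 : ℂ) ∈ resolvSet S)
    (A₁ A₂ : X →L[ℂ] X)
    (hsum : ∀ x : X, A₁ x + A₂ x = res S 0 (res S 0 x))
    (h12 : ∀ x : X, A₁ (A₂ x) = 0) (h21 : ∀ x : X, A₂ (A₁ x) = 0)
    (hcomm1 : ∀ x : X, A₁ (res S 0 x) = res S 0 (A₁ x))
    (hcomm2 : ∀ x : X, A₂ (res S 0 x) = res S 0 (A₂ x)) :
    ∃ Y₁ Y₂ : Submodule ℂ X,
      -- Y₁ = range P₁, Y₂ = range P₂
      ((Y₁ : Set X) = {y : X | ∃ x : X, memD2 S (A₁ x) ∧ y = sqApply S (A₁ x)}) ∧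
      ((Y₂ : Set X) = {y : X | ∃ x : X, memD2 S (A₂ x) ∧ y = sqApply S (A₂ x)}) ∧
      -- X₁ = ker A₂, X₂ = ker A₁
      ((Y₁ : Set X) = {x : X | A₂ x = 0}) ∧
      ((Y₂ : Set X) = {x : X | A₁ x = 0}) ∧
      -- closedness
      IsClosed (Y₁ : Set X) ∧ IsClosed (Y₂ : Set X) ∧
      -- S-invariance
      (∀ x : S.domain, (x : X) ∈ Y₁ → S x ∈ Y₁) ∧
      (∀ x : S.domain, (x : X) ∈ Y₂ → S x ∈ Y₂) ∧
      -- resolvent invariance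
      (∀ lam ∈ resolvSet S, ∀ x ∈ Y₁, res S lam x ∈ Y₁) ∧
      (∀ lam ∈ resolvSet S, ∀ x ∈ Y₂, res S lam x ∈ Y₂) ∧
      -- spectral splitting
      pSpectrum S = pSpectrum (partIn S Y₁) ∪ pSpectrum (partIn S Y₂) :=
  statement1_general S h0 A₁ A₂ hsum h12 h21 hcomm1 hcomm2
end
end

section
/- Let S be an operator on X with iℝ ⊆ ρ(S). Then G₊ ∩ G₋ = {0}. -/
open Complex MeasureTheory Set Filter

noncomputable section

variable {E : Type*} [NormedAddCommGroup E] [NormedSpace ℂ E]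

variable {X : Type*} [NormedAddCommGroup X] [NormedSpace ℂ X] [CompleteSpace X]

open scoped Topology

/-!
A vector lying in both `G₊` and `G₋` has local resolvent extending boundedly to the left half
plane by `φ` and to the right half plane by `ψ`. By the identity theorem `φ` and `ψ` agree near
the imaginary axis, so gluing them gives a bounded entire function, which is constant by
Liouville's theorem. Hence `(S - λ)⁻¹ x` is the same vector `y` at `λ = 0` and `λ = i`; then
`S y - 0 • y = x = S y - i • y` forces `y = 0` and so `x = 0`.
-/

lemma ofReal_im_mul_I_of_re_eq_zero {z : ℂ} (hz : z.re = 0) : (z.im : ℂ) * I = z := by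
  simpa [hz] using re_add_im z

lemma tendsto_ofReal_mul_I_nhdsNE :
    Tendsto (fun t : ℝ => (t : ℂ) * I) (𝓝[≠] 0) (𝓝[≠] 0) := by
  have hcont : Continuous fun t : ℝ => (t : ℂ) * I := by fun_prop
  refine tendsto_nhdsWithin_of_tendsto_nhds_of_eventually_within _ ?_ ?_
  · simpa using (hcont.tendsto 0).mono_left nhdsWithin_le_nhds
  · filter_upwards [self_mem_nhdsWithin] with t ht
    simpa using ht

section GluingAcrossImaginaryAxis

variable {F : Type*} [NormedAddCommGroup F] [NormedSpace ℂ F] {f g : ℂ → F} {U V : Set ℂ}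

lemma exists_isOpen_eqOn_of_eq_on_imaginaryAxis [CompleteSpace F]
    (hU : IsOpen U) (hV : IsOpen V) (hf : DifferentiableOn ℂ f U) (hg : DifferentiableOn ℂ g V)
    (hUV : ∀ t : ℝ, (t : ℂ) * I ∈ U ∩ V) (hfg : ∀ t : ℝ, f (t * I) = g (t * I)) :
    ∃ W, IsOpen W ∧ (∀ t : ℝ, (t : ℂ) * I ∈ W) ∧ EqOn f g W := by
  set W := connectedComponentIn (U ∩ V) 0
  have hWUV : W ⊆ U ∩ V := connectedComponentIn_subset _ _
  have haxis : range (fun t : ℝ => (t : ℂ) * I) ⊆ W :=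
    (isPreconnected_range (by fun_prop)).subset_connectedComponentIn ⟨0, by simp⟩
      (range_subset_iff.mpr hUV)
  have hWopen : IsOpen W := (hU.inter hV).connectedComponentIn
  have h0W : (0 : ℂ) ∈ W := haxis ⟨0, by simp⟩
  refine ⟨W, hWopen, fun t => haxis ⟨t, rfl⟩, ?_⟩
  refine AnalyticOnNhd.eqOn_of_preconnected_of_frequently_eq
    ((hf.mono (hWUV.trans inter_subset_left)).analyticOnNhd hWopen)
    ((hg.mono (hWUV.trans inter_subset_right)).analyticOnNhd hWopen)
    isPreconnected_connectedComponentIn h0W ?_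
  exact tendsto_ofReal_mul_I_nhdsNE.frequently (Frequently.of_forall hfg)

lemma differentiable_ite_re_nonpos [CompleteSpace F]
    (hU : IsOpen U) (hV : IsOpen V) (hUleft : {z : ℂ | z.re ≤ 0} ⊆ U)
    (hVright : {z : ℂ | 0 ≤ z.re} ⊆ V) (hf : DifferentiableOn ℂ f U)
    (hg : DifferentiableOn ℂ g V) (hfg : ∀ t : ℝ, f (t * I) = g (t * I)) :
    Differentiable ℂ (fun z => if z.re ≤ 0 then f z else g z) := by
  intro z
  rcases lt_trichotomy z.re 0 with hz | hz | hz
  · refine (hf.differentiableAt (hU.mem_nhds (hUleft hz.le))).congr_of_eventuallyEq ?_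
    filter_upwards [(isOpen_lt continuous_re continuous_const).mem_nhds hz] with w hw
    exact if_pos (le_of_lt hw)
  · obtain ⟨W, hWopen, haxis, hW⟩ := exists_isOpen_eqOn_of_eq_on_imaginaryAxis hU hV hf hg
      (fun t => ⟨hUleft (by simp), hVright (by simp)⟩) hfg
    have hzW : z ∈ W := ofReal_im_mul_I_of_re_eq_zero hz ▸ haxis z.im
    refine (hf.differentiableAt (hU.mem_nhds (hUleft hz.le))).congr_of_eventuallyEq ?_
    filter_upwards [hWopen.mem_nhds hzW] with w hw
    split_ifs
    exacts [rfl, (hW hw).symm]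
  · refine (hg.differentiableAt (hV.mem_nhds (hVright hz.le))).congr_of_eventuallyEq ?_
    filter_upwards [(isOpen_lt continuous_const continuous_re).mem_nhds hz] with w hw
    exact if_neg (not_le.mpr hw)

lemma exists_const_of_bounded_on_halfPlanes [CompleteSpace F]
    (hU : IsOpen U) (hV : IsOpen V) (hUleft : {z : ℂ | z.re ≤ 0} ⊆ U)
    (hVright : {z : ℂ | 0 ≤ z.re} ⊆ V) (hf : DifferentiableOn ℂ f U)
    (hg : DifferentiableOn ℂ g V) (hfg : ∀ t : ℝ, f (t * I) = g (t * I))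
    (hfC : ∃ C, ∀ z ∈ {z : ℂ | z.re ≤ 0}, ‖f z‖ ≤ C)
    (hgC : ∃ C, ∀ z ∈ {z : ℂ | 0 ≤ z.re}, ‖g z‖ ≤ C) :
    ∃ c, (∀ z : ℂ, z.re ≤ 0 → f z = c) ∧ ∀ z : ℂ, 0 ≤ z.re → g z = c := by
  obtain ⟨C, hC⟩ := hfC
  obtain ⟨D, hD⟩ := hgC
  have hbdd : Bornology.IsBounded (range fun z : ℂ => if z.re ≤ 0 then f z else g z) := by
    refine isBounded_iff_forall_norm_le.mpr ⟨max C D, ?_⟩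
    rintro _ ⟨z, rfl⟩
    dsimp only
    split_ifs with h
    exacts [(hC z h).trans (le_max_left _ _), (hD z (le_of_not_ge h)).trans (le_max_right _ _)]
  obtain ⟨c, hc⟩ := (differentiable_ite_re_nonpos hU hV hUleft hVright hf hg hfg)
    |>.exists_const_forall_eq_of_bounded hbdd
  refine ⟨c, fun z hz => by simpa [hz] using hc z, fun z hz => ?_⟩
  rcases hz.lt_or_eq with hz | hz
  · simpa [not_le.mpr hz] using hc z
  · rw [← ofReal_im_mul_I_of_re_eq_zero hz.symm, ← hfg]
    simpa using hc ((z.im : ℂ) * I)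

end GluingAcrossImaginaryAxis

lemma res_isResolventAt {S : E →ₗ.[ℂ] E} {lam : ℂ} (h : lam ∈ resolvSet S) :
    IsResolventAt S lam (res S lam) := by
  have h' : ∃ R, IsResolventAt S lam R := h
  rw [res, dif_pos h']
  exact h'.choose_spec

lemma eq_zero_of_res_apply_eq {S : E →ₗ.[ℂ] E} {lam mu : ℂ} (hlam : lam ∈ resolvSet S)
    (hmu : mu ∈ resolvSet S) (hne : lam ≠ mu) {x : E} (h : res S lam x = res S mu x) :
    x = 0 := by
  have hdom : res S lam x ∈ S.domain := (res_isResolventAt hlam).1 x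
  have hlam_eq := (res_isResolventAt hlam).2.2 x hdom
  have hmu_eq := (res_isResolventAt hmu).2.2 x (h ▸ hdom)
  simp only [← h] at hmu_eq
  have hzero : res S lam x = 0 := by
    have : (mu - lam) • res S lam x = 0 := by
      linear_combination (norm := module) hlam_eq - hmu_eq
    exact (smul_eq_zero.mp this).resolve_left (sub_ne_zero.mpr hne.symm)
  rw [← hlam_eq, show (⟨res S lam x, hdom⟩ : S.domain) = 0 from Subtype.ext hzero,
    LinearPMap.map_zero, hzero, smul_zero, sub_zero]

/-- `G₊ ∩ G₋ = {0}`. -/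
theorem statement3 (S : X →ₗ.[ℂ] X)
    (him : ∀ t : ℝ, (t : ℂ) * Complex.I ∈ resolvSet S) :
    (Gp S : Set X) ∩ (Gm S : Set X) = {0} := by
  refine Subset.antisymm ?_ (singleton_subset_iff.mpr ⟨(Gp S).zero_mem, (Gm S).zero_mem⟩)
  rintro x ⟨⟨φ, ⟨U, hU, hUleft, hφ⟩, hφC, hφres⟩,
    ⟨ψ, ⟨V, hV, hVright, hψ⟩, hψC, hψres⟩⟩
  obtain ⟨c, hφc, -⟩ := exists_const_of_bounded_on_halfPlanes hU hV hUleft hVright hφ hψ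
    (fun t => by rw [hφres, hψres]) hφC hψC
  refine eq_zero_of_res_apply_eq (him 1) (him 0) (by simp) ?_
  rw [← hφres, ← hφres, hφc _ (by simp), hφc _ (by simp)]

end
end
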